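/- For every x ∈ [0,1], if U is uniform on [0,1] and B is a Bernoulli(1/8) random variable independent of U, then the random variable B·U/4 + (1−B)·G_x^{−1}(U) has the same distribution as U·x + U·(1−U); that is, the update function Φ'(x, b, u) = b·u/4 + (1−b)·G_x^{−1}(u) generates the Markov kernel whose transition law from state x is the law of U·x + U·(1−U). -/

import Mathlib

/-!
Both laws are compared through their distribution functions. For `U` uniform on `[0,1]`, the event
`U x + U (1 - U) ≤ y` means that `U` avoids the open interval between the roots
`(1 + x ± √((1 + x)² - 4y)) / 2`, so `U x + U (1 - U)` has distribution function `F_x`.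
Conditioning on `B`, the other side has distribution function
`(1/8) min(4y, 1) + (7/8) P(G_x⁻¹(U) ≤ y)`, and `P(G_x⁻¹(U) ≤ y) = G_x(y)` since `G_x` is continuous
and nondecreasing on `[0,1]` with `G_x(1) = 1`. Monotonicity is the one real estimate: `F_x` is the
maximum of two branches decreasing in `√((1 + x)² - 4y)`, so it grows at rate at least `1/2` on
`[0, 1/4]`, which compensates the subtracted `(1/2) min(y, 1/4)`. The mixture is then `F_x` by the
definition of `G_x`.
-/

open MeasureTheory

/-- The distribution function `F_x` of `U·x + U·(1−U)` for `U` uniform on `[0,1]`. -/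
noncomputable def F (x y : ℝ) : ℝ :=
  if y < x then (1 + x - Real.sqrt ((1 + x) ^ 2 - 4 * y)) / 2
  else if y < ((1 + x) / 2) ^ 2 then 1 - Real.sqrt ((1 + x) ^ 2 - 4 * y)
  else 1

/-- `G_x(y) = (8/7)·(F_x(y) − (1/2)·min(y, 1/4))`. -/
noncomputable def G (x y : ℝ) : ℝ := 8 / 7 * (F x y - (1 / 2) * min y (1 / 4))

/-- The quantile function (generalized inverse) `G_x^{−1} : [0,1] → [0,1]` of the
distribution with CDF `G_x`. -/
noncomputable def Ginv (x z : ℝ) : ℝ := sInf {y ∈ Set.Icc (0:ℝ) 1 | z ≤ G x y}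

/-- The Bernoulli(1/8) distribution on `ℝ` (value `1` with probability `1/8`,
value `0` with probability `7/8`). -/
noncomputable def bern : Measure ℝ :=
  (1 / 8 : ENNReal) • Measure.dirac (1:ℝ) + (7 / 8 : ENNReal) • Measure.dirac (0:ℝ)

open Set

lemma sub_le_sqrt_sub_sqrt {A y₁ y₂ : ℝ} (h₀ : 0 ≤ y₁) (h₁₂ : y₁ ≤ y₂) (h₂ : 4 * y₂ ≤ A)
    (hA : A ≤ 4) : y₂ - y₁ ≤ √(A - 4 * y₁) - √(A - 4 * y₂) := by
  have hs₁ : √(A - 4 * y₁) ^ 2 = A - 4 * y₁ := Real.sq_sqrt (by linarith)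
  have hs₂ : √(A - 4 * y₂) ^ 2 = A - 4 * y₂ := Real.sq_sqrt (by linarith)
  have hle : √(A - 4 * y₂) ≤ √(A - 4 * y₁) := Real.sqrt_le_sqrt (by linarith)
  have hs₁_le : √(A - 4 * y₁) ≤ 2 :=
    Real.sqrt_le_iff.2 ⟨by norm_num, by linarith⟩
  -- `s₁² - s₂² = 4 (y₂ - y₁)` and `s₁ + s₂ ≤ 4`
  nlinarith [Real.sqrt_nonneg (A - 4 * y₂)]

lemma min_sub_min_le_sqrt_sub_sqrt {A y₁ y₂ : ℝ} (h₀ : 0 ≤ y₁) (h₁₂ : y₁ ≤ y₂) (hA₁ : 1 ≤ A)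
    (hA₄ : A ≤ 4) : min y₂ (1 / 4) - min y₁ (1 / 4) ≤ √(A - 4 * y₁) - √(A - 4 * y₂) := by
  have hanti : √(A - 4 * y₂) ≤ √(A - 4 * min y₂ (1 / 4)) :=
    Real.sqrt_le_sqrt (by linarith [min_le_left y₂ (1 / 4)])
  rcases le_total (1 / 4) y₁ with hy₁ | hy₁
  · rw [min_eq_right hy₁, min_eq_right (hy₁.trans h₁₂), sub_self, sub_nonneg]
    exact Real.sqrt_le_sqrt (by linarith)
  · rw [min_eq_left hy₁]
    have := sub_le_sqrt_sub_sqrt h₀ (le_min h₁₂ hy₁) (by linarith [min_le_right y₂ (1 / 4)]) hA₄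
    linarith

section F

variable {x y : ℝ}

lemma F_eq_max (hx : x ≤ 1) :
    F x y = max ((1 + x - √((1 + x) ^ 2 - 4 * y)) / 2) (1 - √((1 + x) ^ 2 - 4 * y)) := by
  unfold F
  split_ifs with h₁ h₂
  · refine (max_eq_left ?_).symm
    have : 1 - x ≤ √((1 + x) ^ 2 - 4 * y) := Real.le_sqrt_of_sq_le (by nlinarith)
    linarith
  · refine (max_eq_right ?_).symm
    have : √((1 + x) ^ 2 - 4 * y) ≤ 1 - x :=
      Real.sqrt_le_iff.2 ⟨by linarith, by nlinarith⟩
    linarith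
  · rw [Real.sqrt_eq_zero'.2 (by nlinarith)]
    simp only [sub_zero]
    exact (max_eq_right (by linarith)).symm

lemma continuous_F (hx : x ≤ 1) : Continuous (F x) := by
  rw [show F x = _ from funext fun y => F_eq_max (y := y) hx]
  fun_prop

lemma F_eq_one (hy : (1 + x) ^ 2 ≤ 4 * y) : F x y = 1 := by
  unfold F
  rw [if_neg (by nlinarith [sq_nonneg (1 - x)]), if_neg (by nlinarith)]

lemma sqrt_sub_sqrt_le_F_sub_F (hx : x ≤ 1) {y₁ y₂ : ℝ} (h₁₂ : y₁ ≤ y₂) :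
    (√((1 + x) ^ 2 - 4 * y₁) - √((1 + x) ^ 2 - 4 * y₂)) / 2 ≤ F x y₂ - F x y₁ := by
  have hle : √((1 + x) ^ 2 - 4 * y₂) ≤ √((1 + x) ^ 2 - 4 * y₁) :=
    Real.sqrt_le_sqrt (by linarith)
  rw [F_eq_max hx, F_eq_max hx]
  -- each branch of the max increases by at least half the decrease of the square root
  have := le_max_left ((1 + x - √((1 + x) ^ 2 - 4 * y₂)) / 2) (1 - √((1 + x) ^ 2 - 4 * y₂))
  have := le_max_right ((1 + x - √((1 + x) ^ 2 - 4 * y₂)) / 2) (1 - √((1 + x) ^ 2 - 4 * y₂))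
  rcases max_choice ((1 + x - √((1 + x) ^ 2 - 4 * y₁)) / 2) (1 - √((1 + x) ^ 2 - 4 * y₁))
    with h | h <;> rw [h] <;> linarith

lemma F_nonpos (hx₀ : 0 ≤ x) (hx₁ : x ≤ 1) (hy : y < 0) : F x y ≤ 0 := by
  have : 1 + x ≤ √((1 + x) ^ 2 - 4 * y) := Real.le_sqrt_of_sq_le (by linarith)
  rw [F_eq_max hx₁]
  exact max_le (by linarith) (by linarith)

end F

section G

variable {x y : ℝ}

lemma continuous_G (hx : x ≤ 1) : Continuous (G x) := by
  unfold G
  have := continuous_F hx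
  fun_prop

lemma G_eq_one (hx₀ : 0 ≤ x) (hy : (1 + x) ^ 2 ≤ 4 * y) : G x y = 1 := by
  rw [G, F_eq_one hy, min_eq_right (by nlinarith)]
  norm_num

lemma G_one (hx₀ : 0 ≤ x) (hx₁ : x ≤ 1) : G x 1 = 1 :=
  G_eq_one hx₀ (by nlinarith)

lemma G_zero (hx₀ : 0 ≤ x) (hx₁ : x ≤ 1) : G x 0 = 0 := by
  rw [G, F_eq_max hx₁, mul_zero, sub_zero, Real.sqrt_sq (by linarith), sub_self, zero_div,
    max_eq_left (by linarith)]
  norm_num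

lemma monotoneOn_G (hx₀ : 0 ≤ x) (hx₁ : x ≤ 1) : MonotoneOn (G x) (Ici 0) := by
  intro y₁ hy₁ y₂ _ h₁₂
  have hF := sqrt_sub_sqrt_le_F_sub_F hx₁ h₁₂
  have hmin := min_sub_min_le_sqrt_sub_sqrt (A := (1 + x) ^ 2) hy₁ h₁₂ (by nlinarith)
    (by nlinarith)
  unfold G
  linarith

lemma G_nonneg (hx₀ : 0 ≤ x) (hx₁ : x ≤ 1) (hy : 0 ≤ y) : 0 ≤ G x y :=
  G_zero hx₀ hx₁ ▸ monotoneOn_G hx₀ hx₁ (mem_Ici.2 le_rfl) hy hy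

lemma F_eq_mixture : F x y = 1 / 8 * min (4 * y) 1 + 7 / 8 * G x y := by
  unfold G
  rcases le_total y (1 / 4) with h | h
  · rw [min_eq_left h, min_eq_left (by linarith)]; ring
  · rw [min_eq_right h, min_eq_right (by linarith)]; ring

end G

/-- `Ginv x` is definitionally `unitQuantile (G x)`. -/
noncomputable def unitQuantile (g : ℝ → ℝ) (z : ℝ) : ℝ := sInf {y ∈ Icc (0 : ℝ) 1 | z ≤ g y}

section unitQuantile

variable {g : ℝ → ℝ} {y z : ℝ}

lemma bddBelow_unitQuantile_set : BddBelow {y ∈ Icc (0 : ℝ) 1 | z ≤ g y} :=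
  ⟨0, fun _ hy => hy.1.1⟩

lemma unitQuantile_nonneg : 0 ≤ unitQuantile g z :=
  Real.sInf_nonneg fun _ hy => hy.1.1

lemma unitQuantile_le (hy : y ∈ Icc 0 1) (hz : z ≤ g y) : unitQuantile g z ≤ y :=
  csInf_le bddBelow_unitQuantile_set ⟨hy, hz⟩

lemma unitQuantile_le_one (hz : z ≤ g 1) : unitQuantile g z ≤ 1 :=
  unitQuantile_le ⟨zero_le_one, le_rfl⟩ hz

lemma unitQuantile_le_iff (hc : ContinuousOn g (Icc 0 1)) (hm : MonotoneOn g (Icc 0 1))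
    (hz : z ≤ g 1) (hy : y ∈ Icc 0 1) : unitQuantile g z ≤ y ↔ z ≤ g y := by
  refine ⟨fun h => ?_, unitQuantile_le hy⟩
  have hclosed : IsClosed {y ∈ Icc (0 : ℝ) 1 | z ≤ g y} :=
    hc.preimage_isClosed_of_isClosed isClosed_Icc isClosed_Ici
  obtain ⟨hmem, hle⟩ := hclosed.csInf_mem ⟨1, ⟨zero_le_one, le_rfl⟩, hz⟩
    bddBelow_unitQuantile_set
  exact hle.trans (hm hmem hy h)

lemma monotoneOn_unitQuantile : MonotoneOn (unitQuantile g) (Iic (g 1)) :=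
  fun _ _ _ hz₂ h₁₂ => csInf_le_csInf bddBelow_unitQuantile_set
    ⟨1, ⟨zero_le_one, le_rfl⟩, hz₂⟩ fun _ hy => ⟨hy.1, h₁₂.trans hy.2⟩

lemma unitQuantile_of_lt (hm : MonotoneOn g (Icc 0 1)) (hz : g 1 < z) :
    unitQuantile g z = 0 := by
  have hempty : {y ∈ Icc (0 : ℝ) 1 | z ≤ g y} = ∅ :=
    eq_empty_of_forall_notMem fun y hy =>
      absurd (hy.2.trans (hm hy.1 ⟨zero_le_one, le_rfl⟩ hy.1.2)) (not_le.2 hz)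
  rw [unitQuantile, hempty, Real.sInf_empty]

-- monotone below `g 1` and zero above it
lemma measurable_unitQuantile (hm : MonotoneOn g (Icc 0 1)) : Measurable (unitQuantile g) := by
  have hmono : Monotone fun z => unitQuantile g (min z (g 1)) :=
    fun _ _ h => monotoneOn_unitQuantile (mem_Iic.2 (min_le_right _ _))
      (mem_Iic.2 (min_le_right _ _)) (min_le_min_right _ h)
  have heq : unitQuantile g = fun z => if z ≤ g 1 then unitQuantile g (min z (g 1)) else 0 := by
    funext z
    split_ifs with hz
    · rw [min_eq_left hz]
    · exact unitQuantile_of_lt hm (not_le.1 hz)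
  rw [heq]
  exact Measurable.ite measurableSet_Iic hmono.measurable measurable_const

lemma map_unitQuantile_Iic (hc : ContinuousOn g (Icc 0 1)) (hm : MonotoneOn g (Icc 0 1))
    (hg₁ : g 1 = 1) (hy : y ∈ Icc 0 1) :
    (volume.restrict (Icc (0 : ℝ) 1)).map (unitQuantile g) (Iic y) = ENNReal.ofReal (g y) := by
  have hset : unitQuantile g ⁻¹' Iic y ∩ Icc 0 1 = Icc 0 (g y) := by
    ext u
    simp only [mem_inter_iff, mem_preimage, mem_Iic, mem_Icc]
    constructor
    · rintro ⟨h, hu₀, hu₁⟩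
      exact ⟨hu₀, (unitQuantile_le_iff hc hm (hg₁.symm ▸ hu₁) hy).1 h⟩
    · rintro ⟨hu₀, hu⟩
      have hu₁ : u ≤ 1 := hg₁ ▸ hu.trans (hm hy ⟨zero_le_one, le_rfl⟩ hy.2)
      exact ⟨unitQuantile_le hy hu, hu₀, hu₁⟩
  rw [Measure.map_apply (measurable_unitQuantile hm) measurableSet_Iic,
    Measure.restrict_apply (measurable_unitQuantile hm measurableSet_Iic), hset,
    Real.volume_Icc, sub_zero]

end unitQuantile

lemma quadratic_le_iff {x y t u : ℝ} (ht : t ^ 2 = (1 + x) ^ 2 - 4 * y) (ht₀ : 0 ≤ t) :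
    u * x + u * (1 - u) ≤ y ↔ u ≤ (1 + x - t) / 2 ∨ (1 + x + t) / 2 ≤ u := by
  have hfactor : y - (u * x + u * (1 - u)) = (u - (1 + x - t) / 2) * (u - (1 + x + t) / 2) := by
    linear_combination ht / 4
  rw [← sub_nonneg, hfactor, mul_nonneg_iff]
  constructor
  · rintro (⟨-, h⟩ | ⟨h, -⟩)
    · exact Or.inr (by linarith)
    · exact Or.inl (by linarith)
  · rintro (h | h)
    · exact Or.inr ⟨by linarith, by linarith⟩
    · exact Or.inl ⟨by linarith, by linarith⟩

lemma preimage_quadratic_Iic_inter_Icc {x y t : ℝ} (hx₀ : 0 ≤ x) (hx₁ : x ≤ 1)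
    (ht : t ^ 2 = (1 + x) ^ 2 - 4 * y) (ht₀ : 0 ≤ t) :
    (fun u : ℝ => u * x + u * (1 - u)) ⁻¹' Iic y ∩ Icc 0 1 =
      Icc 0 ((1 + x - t) / 2) ∪ Icc ((1 + x + t) / 2) 1 := by
  ext u
  simp only [mem_inter_iff, mem_preimage, mem_Iic, quadratic_le_iff ht ht₀, mem_union, mem_Icc]
  constructor
  · rintro ⟨h | h, hu₀, hu₁⟩
    · exact Or.inl ⟨hu₀, h⟩
    · exact Or.inr ⟨h, hu₁⟩
  · rintro (⟨hu₀, h⟩ | ⟨h, hu₁⟩)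
    · exact ⟨Or.inl h, hu₀, by linarith⟩
    · exact ⟨Or.inr h, by linarith, hu₁⟩

lemma map_quadratic_Iic {x : ℝ} (hx₀ : 0 ≤ x) (hx₁ : x ≤ 1) (y : ℝ) :
    (volume.restrict (Icc (0 : ℝ) 1)).map (fun u => u * x + u * (1 - u)) (Iic y) =
      ENNReal.ofReal (F x y) := by
  have hmeas : Measurable fun u : ℝ => u * x + u * (1 - u) := by fun_prop
  rw [Measure.map_apply hmeas measurableSet_Iic, Measure.restrict_apply (hmeas measurableSet_Iic)]
  rcases le_or_gt ((1 + x) ^ 2) (4 * y) with hy | hy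
  · have hset : (fun u : ℝ => u * x + u * (1 - u)) ⁻¹' Iic y ∩ Icc 0 1 = Icc 0 1 :=
      inter_eq_right.2 fun u _ => by
        simp only [mem_preimage, mem_Iic]
        nlinarith [sq_nonneg (u - (1 + x) / 2)]
    rw [hset, Real.volume_Icc, F_eq_one hy, sub_zero]
  set t := √((1 + x) ^ 2 - 4 * y) with ht_def
  have ht : t ^ 2 = (1 + x) ^ 2 - 4 * y := Real.sq_sqrt (by linarith)
  have ht₀ : 0 < t := Real.sqrt_pos.2 (by linarith)
  have hdisj : Disjoint (Icc 0 ((1 + x - t) / 2)) (Icc ((1 + x + t) / 2) 1) :=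
    disjoint_left.2 fun _ h₁ h₂ => by linarith [h₁.2, h₂.1]
  rw [preimage_quadratic_Iic_inter_Icc hx₀ hx₁ ht ht₀.le, measure_union hdisj measurableSet_Icc,
    Real.volume_Icc, Real.volume_Icc, sub_zero, F_eq_max hx₁, ← ht_def]
  rcases le_or_gt (1 - (1 + x + t) / 2) 0 with hc | hc
  · rw [ENNReal.ofReal_of_nonpos hc, add_zero, max_eq_left (by linarith)]
  · rw [← ENNReal.ofReal_add (by linarith) hc.le, max_eq_right (by linarith)]
    ring_nf

section CDF

variable {x y : ℝ}

lemma measurable_Ginv (hx₀ : 0 ≤ x) (hx₁ : x ≤ 1) : Measurable (Ginv x) :=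
  measurable_unitQuantile ((monotoneOn_G hx₀ hx₁).mono Icc_subset_Ici_self)

lemma map_div_four_Iic :
    (volume.restrict (Icc (0 : ℝ) 1)).map (fun u => u / 4) (Iic y) =
      ENNReal.ofReal (min (4 * y) 1) := by
  have hset : (fun u : ℝ => u / 4) ⁻¹' Iic y ∩ Icc 0 1 = Icc 0 (min (4 * y) 1) := by
    ext u
    simp only [mem_inter_iff, mem_preimage, mem_Iic, mem_Icc, le_min_iff]
    constructor <;> rintro ⟨h₁, h₂, h₃⟩ <;> refine ⟨?_, ?_, ?_⟩ <;> linarith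
  have hmeas : Measurable fun u : ℝ => u / 4 := by fun_prop
  rw [Measure.map_apply hmeas measurableSet_Iic,
    Measure.restrict_apply (hmeas measurableSet_Iic), hset, Real.volume_Icc, sub_zero]

lemma map_Ginv_Iic (hx₀ : 0 ≤ x) (hx₁ : x ≤ 1) (hy : 0 ≤ y) :
    (volume.restrict (Icc (0 : ℝ) 1)).map (Ginv x) (Iic y) = ENNReal.ofReal (G x y) := by
  have hm : MonotoneOn (G x) (Icc 0 1) := (monotoneOn_G hx₀ hx₁).mono Icc_subset_Ici_self
  rcases le_or_gt y 1 with hy₁ | hy₁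
  · exact map_unitQuantile_Iic (continuous_G hx₁).continuousOn hm (G_one hx₀ hx₁) ⟨hy, hy₁⟩
  · have hset : Ginv x ⁻¹' Iic y ∩ Icc 0 1 = Icc 0 1 :=
      inter_eq_right.2 fun u hu =>
        (unitQuantile_le_one ((G_one hx₀ hx₁).symm ▸ hu.2)).trans hy₁.le
    rw [Measure.map_apply (measurable_Ginv hx₀ hx₁) measurableSet_Iic,
      Measure.restrict_apply (measurable_Ginv hx₀ hx₁ measurableSet_Iic), hset, Real.volume_Icc,
      G_eq_one hx₀ (by nlinarith), sub_zero]

lemma map_Ginv_Iic_of_neg (hx₀ : 0 ≤ x) (hx₁ : x ≤ 1) (hy : y < 0) :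
    (volume.restrict (Icc (0 : ℝ) 1)).map (Ginv x) (Iic y) = 0 := by
  have hempty : Ginv x ⁻¹' Iic y = ∅ :=
    eq_empty_of_forall_notMem fun _ hu => not_le.2 hy (unitQuantile_nonneg.trans hu)
  rw [Measure.map_apply (measurable_Ginv hx₀ hx₁) measurableSet_Iic, hempty,
    measure_empty]

end CDF

instance isProbabilityMeasure_bern : IsProbabilityMeasure bern :=
  ⟨by
    rw [bern, Measure.add_apply, Measure.smul_apply, Measure.smul_apply, measure_univ,
      measure_univ, smul_eq_mul, smul_eq_mul, mul_one, mul_one, ENNReal.div_add_div_same,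
      ENNReal.div_eq_one_iff] <;> norm_num⟩

lemma map_bern_prod {β : Type*} [MeasurableSpace β] {f : ℝ × ℝ → β} (hf : Measurable f)
    (μ : Measure ℝ) [SFinite μ] :
    (bern.prod μ).map f =
      (1 / 8 : ENNReal) • μ.map (fun u => f (1, u)) +
        (7 / 8 : ENNReal) • μ.map (fun u => f (0, u)) := by
  rw [bern, Measure.add_prod, Measure.prod_smul_left, Measure.prod_smul_left, Measure.dirac_prod,
    Measure.dirac_prod, Measure.map_add _ _ hf, Measure.map_smul, Measure.map_smul,
    Measure.map_map hf measurable_prodMk_left, Measure.map_map hf measurable_prodMk_left]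
  rfl

/-- If `U` is uniform on `[0,1]` and `B` is Bernoulli(1/8) independent of `U`, then
`B·U/4 + (1−B)·G_x^{−1}(U)` has the same distribution as `U·x + U·(1−U)`: the update
function `Φ'(x,b,u) = b·u/4 + (1−b)·G_x^{−1}(u)` generates the Markov kernel whose
transition law from `x` is the law of `U·x + U·(1−U)`. -/
theorem multigamma_update (x : ℝ) (hx : x ∈ Set.Icc (0:ℝ) 1) :
    Measure.map (fun p : ℝ × ℝ => p.1 * p.2 / 4 + (1 - p.1) * Ginv x p.2)
        (bern.prod (volume.restrict (Set.Icc (0:ℝ) 1)))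
      = Measure.map (fun u : ℝ => u * x + u * (1 - u))
          (volume.restrict (Set.Icc (0:ℝ) 1)) := by
  obtain ⟨hx₀, hx₁⟩ := hx
  have hGinv := measurable_Ginv hx₀ hx₁
  refine Measure.ext_of_Iic _ _ fun y => ?_
  rw [map_bern_prod (by fun_prop)]
  simp only [one_mul, zero_mul, sub_self, sub_zero, zero_add, add_zero, zero_div]
  rw [Measure.add_apply, Measure.smul_apply, Measure.smul_apply, map_div_four_Iic,
    map_quadratic_Iic hx₀ hx₁, smul_eq_mul, smul_eq_mul]
  rcases lt_or_ge y 0 with hy | hy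
  · rw [map_Ginv_Iic_of_neg hx₀ hx₁ hy, F_nonpos hx₀ hx₁ hy |> ENNReal.ofReal_of_nonpos,
      ENNReal.ofReal_of_nonpos (by linarith [min_le_left (4 * y) 1])]
    simp
  · have hG := G_nonneg hx₀ hx₁ hy
    rw [map_Ginv_Iic hx₀ hx₁ hy, F_eq_mixture, ENNReal.ofReal_add (by positivity) (by positivity),
      ENNReal.ofReal_mul (by norm_num), ENNReal.ofReal_mul (by norm_num),
      ENNReal.ofReal_div_of_pos (by norm_num), ENNReal.ofReal_div_of_pos (by norm_num)]
    norm_num
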